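/- arXiv:2604.25854 — 3 statements merged into one kernel-verified Lean document; each statement's English description precedes it below -/
import Mathlib

section
/- Let G be an additive group and U a nonprincipal ultrafilter on G closed under countable intersections. For every state φ on ℓ∞(G) there exists a state ψ on ℓ∞(G) such that for every f ∈ ℓ∞(G) the function j ↦ φ(τ_j f) tends to ψ(f) along U; moreover, every state ψ with this property is singular, i.e. ν_ψ(I) = 0 for every finite I ⊆ G. -/
open scoped ENNReal
open Filter

/-!
The functionals `φ ∘ τ_j` are states of norm at most `‖φ‖`, so by compactness of closed balls in `ℂ`
they converge pointwise along any ultrafilter; the limit is again linear, bounded and positive, hence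
a state. For singularity: the masses `φ(χ_{x})` of the singletons have finite sums bounded by
`φ(1) = 1`, so they tend to `0` along the cofinite filter, which a nonprincipal ultrafilter refines;
since `τ_j χ_{a} = χ_{a - j}`, the limit state gives mass `0` to every finite set.
-/

/-- The indicator function of `I` as an element of `ℓ∞(κ)`. -/
noncomputable def chi {κ : Type*} (I : Set κ) : lp (fun _ : κ => ℂ) ∞ :=
  ⟨I.indicator (fun _ => (1 : ℂ)), memℓp_infty ⟨1, by
    rintro x ⟨i, rfl⟩
    by_cases h : i ∈ I <;> simp [Set.indicator, h]⟩⟩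

/-- A state on `ℓ∞(κ)`: a continuous linear functional with `φ 1 = 1` that takes
nonnegative real values on functions with nonnegative real values. -/
structure IsState {κ : Type*} (φ : lp (fun _ : κ => ℂ) ∞ →L[ℂ] ℂ) : Prop where
  map_one : φ 1 = 1
  nonneg : ∀ f : lp (fun _ : κ => ℂ) ∞,
    (∀ i, ∃ r : ℝ, 0 ≤ r ∧ f i = r) → ∃ r : ℝ, 0 ≤ r ∧ φ f = r

/-- The translate `τ_j f`, `(τ_j f) i = f (i + j)`, as an element of `ℓ∞(G)`. -/
noncomputable def tau {G : Type*} [AddGroup G] (j : G) (f : lp (fun _ : G => ℂ) ∞) :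
    lp (fun _ : G => ℂ) ∞ :=
  ⟨fun i => f (i + j), memℓp_infty ⟨‖f‖, by
    rintro x ⟨i, rfl⟩
    exact lp.norm_apply_le_norm ENNReal.top_ne_zero f (i + j)⟩⟩

open scoped ComplexOrder Topology

theorem ContinuousLinearMap.exists_tendsto_ultrafilter_of_norm_le
    {ι 𝕜 E F : Type*} [NontriviallyNormedField 𝕜] [NormedAddCommGroup E] [NormedSpace 𝕜 E]
    [NormedAddCommGroup F] [NormedSpace 𝕜 F] [ProperSpace F]
    (U : Ultrafilter ι) (Φ : ι → E →L[𝕜] F) {C : ℝ} (hΦ : ∀ i, ‖Φ i‖ ≤ C) :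
    ∃ L : E →L[𝕜] F, ∀ x, Tendsto (fun i => Φ i x) U (𝓝 (L x)) := by
  have hbound : ∀ x i, ‖Φ i x‖ ≤ C * ‖x‖ := fun x i =>
    ((Φ i).le_opNorm x).trans (mul_le_mul_of_nonneg_right (hΦ i) (norm_nonneg x))
  have hlim : ∀ x, ∃ y, Tendsto (fun i => Φ i x) U (𝓝 y) := fun x => by
    obtain ⟨y, -, hy⟩ := (isCompact_closedBall (0 : F) (C * ‖x‖)).ultrafilter_le_nhds
      (U.map fun i => Φ i x)
      (by
        rw [Ultrafilter.coe_map, le_principal_iff, mem_map]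
        exact univ_mem' fun i => mem_closedBall_zero_iff.2 (hbound x i))
    exact ⟨y, by rwa [Ultrafilter.coe_map] at hy⟩
  choose L hL using hlim
  let L' : E →ₗ[𝕜] F :=
    { toFun := L
      map_add' := fun x y =>
        tendsto_nhds_unique (hL (x + y)) (by simpa using (hL x).add (hL y))
      map_smul' := fun c x =>
        tendsto_nhds_unique (hL (c • x)) (by simpa using (hL x).const_smul c) }
  exact ⟨L'.mkContinuous C fun x => le_of_tendsto (hL x).norm (.of_forall (hbound x)), hL⟩

lemma chi_finset {κ : Type*} (T : Finset κ) : chi (T : Set κ) = ∑ x ∈ T, chi {x} := by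
  classical
  ext i
  rw [lp.coeFn_sum, Finset.sum_apply]
  simp [chi, Set.indicator_apply]

section Translation

variable {G : Type*} [AddGroup G]

noncomputable def tauL (j : G) : lp (fun _ : G => ℂ) ∞ →L[ℂ] lp (fun _ : G => ℂ) ∞ :=
  LinearMap.mkContinuous
    { toFun := tau j
      map_add' := fun _ _ => rfl
      map_smul' := fun _ _ => rfl }
    1 fun f => by
      rw [one_mul]
      exact lp.norm_le_of_forall_le (norm_nonneg f) fun i =>
        lp.norm_apply_le_norm ENNReal.top_ne_zero f (i + j)

@[simp]
lemma tauL_apply (j : G) (f : lp (fun _ : G => ℂ) ∞) : tauL j f = tau j f := rfl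

lemma norm_tauL_le (j : G) : ‖tauL j‖ ≤ 1 :=
  LinearMap.mkContinuous_norm_le _ zero_le_one _

@[simp]
lemma tau_one (j : G) : tau j 1 = 1 := rfl

lemma tau_chi_singleton (j a : G) : tau j (chi {a}) = chi {a - j} := by
  classical
  ext i
  simp only [tau, chi]
  rw [Set.indicator_apply, Set.indicator_apply]
  simp [eq_sub_iff_add_eq]

end Translation

lemma Complex.nonneg_iff_exists_real {z : ℂ} : 0 ≤ z ↔ ∃ r : ℝ, 0 ≤ r ∧ z = r := by
  rw [RCLike.nonneg_iff_exists_ofReal]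
  simp [eq_comm]

namespace IsState

variable {κ : Type*} {φ : lp (fun _ : κ => ℂ) ∞ →L[ℂ] ℂ}

lemma map_nonneg (hφ : IsState φ) {f : lp (fun _ : κ => ℂ) ∞} (hf : ∀ i, 0 ≤ f i) :
    0 ≤ φ f := by
  simp only [Complex.nonneg_iff_exists_real] at hf ⊢
  exact hφ.nonneg f hf

lemma mono (hφ : IsState φ) {f g : lp (fun _ : κ => ℂ) ∞} (h : ∀ i, f i ≤ g i) :
    φ f ≤ φ g := by
  simpa using hφ.map_nonneg (f := g - f) fun i => by simpa using h i

lemma map_chi_nonneg (hφ : IsState φ) (I : Set κ) : 0 ≤ φ (chi I) :=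
  hφ.map_nonneg fun i => by by_cases h : i ∈ I <;> simp [chi, h]

lemma map_chi_le_one (hφ : IsState φ) (I : Set κ) : φ (chi I) ≤ 1 :=
  hφ.map_one ▸ hφ.mono fun i => by by_cases h : i ∈ I <;> simp [chi, h]

lemma of_tendsto {ι : Type*} {l : Filter ι} [l.NeBot] {Φ : ι → lp (fun _ : κ => ℂ) ∞ →L[ℂ] ℂ}
    (hΦ : ∀ i, IsState (Φ i)) (h : ∀ f, Tendsto (fun i => Φ i f) l (𝓝 (φ f))) : IsState φ where
  map_one := tendsto_nhds_unique (h 1) (by simp [(hΦ _).map_one])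
  nonneg f hf := Complex.nonneg_iff_exists_real.1 <|
    ge_of_tendsto' (h f) fun i => (hΦ i).map_nonneg fun k => Complex.nonneg_iff_exists_real.2 (hf k)

lemma comp_tauL {G : Type*} [AddGroup G] {φ : lp (fun _ : G => ℂ) ∞ →L[ℂ] ℂ} (hφ : IsState φ)
    (j : G) : IsState (φ.comp (tauL j)) where
  map_one := by simp [hφ.map_one]
  nonneg f hf := hφ.nonneg _ fun i => hf (i + j)

lemma summable_norm_map_chi_singleton (hφ : IsState φ) :
    Summable fun x => ‖φ (chi {x})‖ := by
  refine summable_of_sum_le (c := 1) (fun _ => norm_nonneg _) fun T => ?_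
  have : ((∑ x ∈ T, ‖φ (chi {x})‖ : ℝ) : ℂ) ≤ 1 := by
    push_cast
    simp_rw [Complex.norm_of_nonneg' (hφ.map_chi_nonneg _), ← map_sum, ← chi_finset]
    exact hφ.map_chi_le_one _
  exact_mod_cast this

lemma tendsto_map_chi_singleton_cofinite (hφ : IsState φ) :
    Tendsto (fun x => φ (chi {x})) cofinite (𝓝 0) :=
  hφ.summable_norm_map_chi_singleton.of_norm.tendsto_cofinite_zero

lemma tendsto_map_tau_chi {G : Type*} [AddGroup G] {φ : lp (fun _ : G => ℂ) ∞ →L[ℂ] ℂ}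
    (hφ : IsState φ) {l : Filter G} (hl : l ≤ cofinite) {I : Set G} (hI : I.Finite) :
    Tendsto (fun j => φ (tau j (chi I))) l (𝓝 0) := by
  lift I to Finset G using hI
  have hsum : ∀ j, φ (tau j (chi I)) = ∑ a ∈ I, φ (chi {a - j}) := fun j => by
    rw [← tauL_apply, chi_finset, map_sum, map_sum]
    simp [tau_chi_singleton]
  simp_rw [hsum]
  simpa using tendsto_finsetSum I fun a _ => hφ.tendsto_map_chi_singleton_cofinite.comp
    ((sub_right_injective (b := a)).tendsto_cofinite.mono_left hl)

end IsState

lemma Ultrafilter.le_cofinite_of_forall_finite_notMem {α : Type*} (U : Ultrafilter α)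
    (hU : ∀ A : Set α, A.Finite → A ∉ U) : (U : Filter α) ≤ cofinite :=
  le_cofinite_iff_compl_singleton_mem.2 fun x =>
    U.compl_mem_iff_notMem.2 (hU _ (Set.finite_singleton x))

theorem stmt_1_general {G : Type*} [AddGroup G] (U : Ultrafilter G)
    (hnonpr : ∀ A : Set G, A.Finite → A ∉ U)
    (φ : lp (fun _ : G => ℂ) ∞ →L[ℂ] ℂ) (hφ : IsState φ) :
    (∃ ψ : lp (fun _ : G => ℂ) ∞ →L[ℂ] ℂ, IsState ψ ∧
      ∀ f : lp (fun _ : G => ℂ) ∞,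
        Tendsto (fun j => φ (tau j f)) ↑U (nhds (ψ f))) ∧
    ∀ ψ : lp (fun _ : G => ℂ) ∞ →L[ℂ] ℂ, IsState ψ →
      (∀ f : lp (fun _ : G => ℂ) ∞,
        Tendsto (fun j => φ (tau j f)) ↑U (nhds (ψ f))) →
      ∀ I : Set G, I.Finite → ψ (chi I) = 0 := by
  refine ⟨?_, fun ψ _ hψ I hI => ?_⟩
  · have hnorm : ∀ j, ‖φ.comp (tauL j)‖ ≤ ‖φ‖ := fun j =>
      (φ.opNorm_comp_le _).trans (mul_le_of_le_one_right (norm_nonneg φ) (norm_tauL_le j))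
    obtain ⟨ψ, hψ⟩ :=
      ContinuousLinearMap.exists_tendsto_ultrafilter_of_norm_le U (fun j => φ.comp (tauL j)) hnorm
    exact ⟨ψ, IsState.of_tendsto hφ.comp_tauL hψ, hψ⟩
  · exact tendsto_nhds_unique (hψ (chi I))
      (hφ.tendsto_map_tau_chi (U.le_cofinite_of_forall_finite_notMem hnonpr) hI)

theorem stmt_1 {G : Type*} [AddGroup G] (U : Ultrafilter G)
    (hnonpr : ∀ A : Set G, A.Finite → A ∉ U)
    (hsigma : ∀ A : ℕ → Set G, (∀ n, A n ∈ U) → (⋂ n, A n) ∈ U)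
    (φ : lp (fun _ : G => ℂ) ∞ →L[ℂ] ℂ) (hφ : IsState φ) :
    (∃ ψ : lp (fun _ : G => ℂ) ∞ →L[ℂ] ℂ, IsState ψ ∧
      ∀ f : lp (fun _ : G => ℂ) ∞,
        Tendsto (fun j => φ (tau j f)) ↑U (nhds (ψ f))) ∧
    ∀ ψ : lp (fun _ : G => ℂ) ∞ →L[ℂ] ℂ, IsState ψ →
      (∀ f : lp (fun _ : G => ℂ) ∞,
        Tendsto (fun j => φ (tau j f)) ↑U (nhds (ψ f))) →
      ∀ I : Set G, I.Finite → ψ (chi I) = 0 :=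
  stmt_1_general U hnonpr φ hφ
end

section
/- Let G be an additive group and U a nonprincipal ultrafilter on G closed under countable intersections. Let φ be a σ-additive state on ℓ∞(G) and let ψ be a state such that for every f ∈ ℓ∞(G) the function j ↦ φ(τ_j f) tends to ψ(f) along U. Then ψ is σ-additive: for every sequence (A_n)_{n∈ℕ} of pairwise disjoint subsets of G, ν_ψ(⋃_n A_n) = ∑'_n ν_ψ(A_n). -/
open scoped ENNReal
open Filter

/-! Translation maps `χ_A` to the indicator of a translate of `A`, so by σ-additivity of `φ`,
`φ (τ_j χ_{⋃ A_n}) = ∑ φ (τ_j χ_{A_n})` for every `j`. Because `U` is closed under countable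
intersections, a single `j` brings every term within `ε / 2 ^ (n + 2)` of its limit
`ψ (χ_{A_n})` and the left side within `ε / 2` of `ψ (χ_{⋃ A_n})`; hence the limits pass through
the series. -/

open scoped Topology

theorem countableInterFilter_of_iInter_nat_mem {α : Type*} {l : Filter α}
    (h : ∀ s : ℕ → Set α, (∀ n, s n ∈ l) → ⋂ n, s n ∈ l) : CountableInterFilter l where
  countable_sInter_mem S hS hSl := by
    rcases S.eq_empty_or_nonempty with rfl | hne
    · simp
    · obtain ⟨s, rfl⟩ := hS.exists_eq_range hne
      rw [Set.sInter_range]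
      exact h s fun n => hSl _ (Set.mem_range_self n)

section NormBounds

variable {ι E : Type*} [NormedAddCommGroup E] [CompleteSpace E] {a b : ι → E} {δ : ι → ℝ}

theorem Summable.of_norm_sub_le (hb : Summable b) (hδ : Summable δ)
    (h : ∀ i, ‖b i - a i‖ ≤ δ i) : Summable a := by
  simpa using hb.sub (.of_norm_bounded hδ h)

theorem norm_tsum_sub_tsum_le {d : ℝ} (hb : Summable b) (hδ : HasSum δ d)
    (h : ∀ i, ‖b i - a i‖ ≤ δ i) : ‖∑' i, b i - ∑' i, a i‖ ≤ d := by
  rw [← hb.tsum_sub (hb.of_norm_sub_le hδ.summable h)]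
  exact tsum_of_norm_bounded hδ h

end NormBounds

theorem hasSum_of_tendsto_of_countableInterFilter {α E : Type*} [NormedAddCommGroup E]
    [CompleteSpace E] {l : Filter α} [l.NeBot] [CountableInterFilter l]
    {F : ℕ → α → E} {a : ℕ → E} {g : E} (hF : ∀ n, Tendsto (F n) l (𝓝 (a n)))
    (hsum : ∀ j, Summable fun n => F n j) (hg : Tendsto (fun j => ∑' n, F n j) l (𝓝 g)) :
    HasSum a g := by
  have hclose : ∀ ε > 0, ∃ j, (∀ n, ‖F n j - a n‖ ≤ ε / 2 / 2 / 2 ^ n) ∧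
      dist (∑' n, F n j) g ≤ ε / 2 := by
    intro ε hε
    have hterms : ∀ᶠ j in l, ∀ n, ‖F n j - a n‖ ≤ ε / 2 / 2 / 2 ^ n :=
      eventually_countable_forall.2 fun n =>
        (hF n).eventually (Metric.closedBall_mem_nhds _ (ε := ε / 2 / 2 / 2 ^ n) (by positivity))
          |>.mono fun j hj => by rwa [← dist_eq_norm]
    exact (hterms.and (hg.eventually (Metric.closedBall_mem_nhds g (by positivity)))).exists
  obtain ⟨j₀, hj₀, -⟩ := hclose 1 one_pos
  have ha : Summable a := (hsum j₀).of_norm_sub_le (summable_geometric_two' _) hj₀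
  refine ha.hasSum_iff.2 (eq_of_forall_dist_le fun ε hε => ?_)
  obtain ⟨j, hj, hjg⟩ := hclose ε hε
  calc dist (∑' n, a n) g ≤ dist (∑' n, F n j) (∑' n, a n) + dist (∑' n, F n j) g :=
        dist_triangle_left _ _ _
    _ ≤ ε / 2 + ε / 2 := by
        rw [dist_eq_norm]
        exact add_le_add (norm_tsum_sub_tsum_le (hsum j) (hasSum_geometric_two' _) hj) hjg
    _ = ε := add_halves ε

section Indicators

variable {κ : Type*}

theorem chi_apply (I : Set κ) (i : κ) : chi I i = I.indicator 1 i := rfl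

theorem chi_add_chi_compl (I : Set κ) : chi I + chi Iᶜ = 1 := by
  ext i
  simp [lp.infty_coeFn_one, chi_apply, Set.indicator_self_add_compl_apply]

theorem chi_biUnion_finset {ι : Type*} (s : Finset ι) (A : ι → Set κ)
    (hA : (s : Set ι).PairwiseDisjoint A) : chi (⋃ i ∈ s, A i) = ∑ i ∈ s, chi (A i) := by
  ext i
  rw [chi_apply, Finset.indicator_biUnion_apply s A hA, lp.coeFn_sum, Finset.sum_apply]
  rfl

theorem tau_chi {G : Type*} [AddGroup G] (j : G) (A : Set G) :
    tau j (chi A) = chi ((· + j) ⁻¹' A) :=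
  rfl

end Indicators

namespace IsState

variable {κ : Type*} {φ : lp (fun _ : κ => ℂ) ∞ →L[ℂ] ℂ}

theorem exists_apply_chi_eq (hφ : IsState φ) (I : Set κ) :
    ∃ r : ℝ, r ∈ Set.Icc 0 1 ∧ φ (chi I) = r := by
  have hnonneg : ∀ J : Set κ, ∃ r : ℝ, 0 ≤ r ∧ φ (chi J) = r := fun J =>
    hφ.nonneg _ fun i => by
      by_cases hi : i ∈ J
      · exact ⟨1, zero_le_one, by simp [chi_apply, hi]⟩
      · exact ⟨0, le_rfl, by simp [chi_apply, hi]⟩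
  obtain ⟨r, hr, hrI⟩ := hnonneg I
  obtain ⟨s, hs, hsI⟩ := hnonneg Iᶜ
  have hsum : (r : ℂ) + s = 1 := by
    rw [← hrI, ← hsI, ← map_add, chi_add_chi_compl, hφ.map_one]
  exact ⟨r, ⟨hr, by linarith [show r + s = 1 by exact_mod_cast hsum]⟩, hrI⟩

theorem summable_apply_chi (hφ : IsState φ) {A : ℕ → Set κ}
    (hA : Pairwise (Function.onFun Disjoint A)) : Summable fun n => φ (chi (A n)) := by
  choose r hr hrA using fun n => hφ.exists_apply_chi_eq (A n)
  simp only [hrA, Complex.summable_ofReal]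
  refine summable_of_sum_range_le (c := 1) (fun n => (hr n).1) fun N => ?_
  obtain ⟨t, ht, htA⟩ := hφ.exists_apply_chi_eq (⋃ n ∈ Finset.range N, A n)
  have : ∑ n ∈ Finset.range N, (r n : ℂ) = t := by
    rw [← htA, chi_biUnion_finset _ _ (hA.set_pairwise _), map_sum]
    simp only [hrA]
  exact (show ∑ n ∈ Finset.range N, r n = t by exact_mod_cast this) ▸ ht.2

end IsState

theorem stmt_2_general {G : Type*} [AddGroup G] (U : Ultrafilter G)
    (hsigma : ∀ A : ℕ → Set G, (∀ n, A n ∈ U) → (⋂ n, A n) ∈ U)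
    (φ ψ : lp (fun _ : G => ℂ) ∞ →L[ℂ] ℂ) (hφ : IsState φ)
    (hφσ : ∀ A : ℕ → Set G, Pairwise (Function.onFun Disjoint A) →
      φ (chi (⋃ n, A n)) = ∑' n, φ (chi (A n)))
    (hlim : ∀ f : lp (fun _ : G => ℂ) ∞,
      Tendsto (fun j => φ (tau j f)) ↑U (nhds (ψ f))) :
    ∀ A : ℕ → Set G, Pairwise (Function.onFun Disjoint A) →
      ψ (chi (⋃ n, A n)) = ∑' n, ψ (chi (A n)) := by
  intro A hA
  have : CountableInterFilter (U : Filter G) := countableInterFilter_of_iInter_nat_mem hsigma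
  have hA' : ∀ j : G, Pairwise (Function.onFun Disjoint fun n => (· + j) ⁻¹' A n) :=
    fun j m n hmn => (hA hmn).preimage _
  refine (hasSum_of_tendsto_of_countableInterFilter (fun n => hlim (chi (A n)))
    (fun j => ?_) ?_).tsum_eq.symm
  · simpa only [tau_chi] using hφ.summable_apply_chi (hA' j)
  · refine (hlim (chi (⋃ n, A n))).congr fun j => ?_
    simp only [tau_chi, Set.preimage_iUnion, hφσ _ (hA' j)]

theorem stmt_2 {G : Type*} [AddGroup G] (U : Ultrafilter G)
    (hnonpr : ∀ A : Set G, A.Finite → A ∉ U)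
    (hsigma : ∀ A : ℕ → Set G, (∀ n, A n ∈ U) → (⋂ n, A n) ∈ U)
    (φ ψ : lp (fun _ : G => ℂ) ∞ →L[ℂ] ℂ) (hφ : IsState φ) (hψ : IsState ψ)
    (hφσ : ∀ A : ℕ → Set G, Pairwise (Function.onFun Disjoint A) →
      φ (chi (⋃ n, A n)) = ∑' n, φ (chi (A n)))
    (hlim : ∀ f : lp (fun _ : G => ℂ) ∞,
      Tendsto (fun j => φ (tau j f)) ↑U (nhds (ψ f))) :
    ∀ A : ℕ → Set G, Pairwise (Function.onFun Disjoint A) →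
      ψ (chi (⋃ n, A n)) = ∑' n, ψ (chi (A n)) :=
  stmt_2_general U hsigma φ ψ hφ hφσ hlim
end

section
/- Let U be an ultrafilter on κ. Then there exists a unique state φ_U on ℓ∞(κ) such that for every f ∈ ℓ∞(κ), f tends to φ_U(f) along U; its induced measure satisfies ν_{φ_U}(I) = 1 if I ∈ U and ν_{φ_U}(I) = 0 otherwise. If moreover U is σ-complete and nonprincipal, then φ_U is singular and σ-additive. -/
open scoped ENNReal
open Filter

/-! A bounded function has a limit along an ultrafilter, since bounded sets of `ℂ` are relatively
compact; limits are linear, unital and preserve the closed cone of nonnegative reals, so taking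
the limit along `U` is a state, and it is the only candidate. The limit of an indicator `χ_I` is
`1` or `0` according to whether `I ∈ U`. If `U` is σ-complete, a countable union lies in `U` only
if one of its pieces does, and for a disjoint family at most one piece can, which gives
σ-additivity. -/

lemma Ultrafilter.exists_mem_of_iUnion_mem {κ : Type*} {U : Ultrafilter κ}
    (hσ : ∀ A : ℕ → Set κ, (∀ n, A n ∈ U) → (⋂ n, A n) ∈ U) {A : ℕ → Set κ}
    (hA : (⋃ n, A n) ∈ U) : ∃ n, A n ∈ U := by
  by_contra! h
  have hcompl : (⋃ n, A n)ᶜ ∈ U := by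
    rw [Set.compl_iUnion]
    exact hσ _ fun n => Ultrafilter.compl_mem_iff_notMem.2 (h n)
  exact Ultrafilter.compl_notMem_iff.2 hA hcompl

lemma Ultrafilter.exists_tendsto_of_isBounded_range {κ E : Type*} [PseudoMetricSpace E]
    [ProperSpace E] (U : Ultrafilter κ) {f : κ → E} (hf : Bornology.IsBounded (Set.range f)) :
    ∃ z, Tendsto f U (nhds z) := by
  obtain ⟨z, -, hz⟩ := hf.isCompact_closure.ultrafilter_le_nhds (U.map f)
    (le_principal_iff.2 (mem_map.2 (univ_mem' fun i => subset_closure (Set.mem_range_self i))))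
  exact ⟨z, hz⟩

section UltrafilterState

open scoped ComplexOrder

variable {κ : Type*} (U : Ultrafilter κ)

lemma tendsto_limUnder_ultrafilter_lp_infty (f : lp (fun _ : κ => ℂ) ∞) :
    Tendsto (fun i => f i) U (nhds (limUnder (U : Filter κ) fun i => f i)) := by
  refine tendsto_nhds_limUnder (U.exists_tendsto_of_isBounded_range ?_)
  refine isBounded_iff_forall_norm_le.2 ⟨‖f‖, ?_⟩
  rintro _ ⟨i, rfl⟩
  exact lp.norm_apply_le_norm ENNReal.top_ne_zero f i

noncomputable def ultrafilterState : lp (fun _ : κ => ℂ) ∞ →L[ℂ] ℂ :=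
  LinearMap.mkContinuous
    { toFun := fun f => limUnder (U : Filter κ) fun i => f i
      map_add' := fun f g => tendsto_nhds_unique (tendsto_limUnder_ultrafilter_lp_infty U _)
        ((tendsto_limUnder_ultrafilter_lp_infty U f).add
          (tendsto_limUnder_ultrafilter_lp_infty U g))
      map_smul' := fun c f => tendsto_nhds_unique (tendsto_limUnder_ultrafilter_lp_infty U _)
        ((tendsto_limUnder_ultrafilter_lp_infty U f).const_smul c) }
    1 fun f => by
      rw [one_mul]
      exact le_of_tendsto (tendsto_limUnder_ultrafilter_lp_infty U f).norm
        (Eventually.of_forall fun i => lp.norm_apply_le_norm ENNReal.top_ne_zero f i)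

lemma tendsto_ultrafilterState (f : lp (fun _ : κ => ℂ) ∞) :
    Tendsto (fun i => f i) U (nhds (ultrafilterState U f)) :=
  tendsto_limUnder_ultrafilter_lp_infty U f

lemma eq_ultrafilterState {φ : lp (fun _ : κ => ℂ) ∞ →L[ℂ] ℂ}
    (hφ : ∀ f : lp (fun _ : κ => ℂ) ∞, Tendsto (fun i => f i) U (nhds (φ f))) :
    φ = ultrafilterState U :=
  ContinuousLinearMap.ext fun f => tendsto_nhds_unique (hφ f) (tendsto_ultrafilterState U f)

lemma isState_ultrafilterState : IsState (ultrafilterState U) where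
  map_one := tendsto_nhds_unique (tendsto_ultrafilterState U 1) <| by
    simpa only [lp.infty_coeFn_one, Pi.one_apply] using tendsto_const_nhds
  nonneg f hf := by
    have hlim : 0 ≤ ultrafilterState U f :=
      isClosed_Ici.mem_of_tendsto (tendsto_ultrafilterState U f) <| Eventually.of_forall fun i => by
        obtain ⟨r, hr, hfr⟩ := hf i
        simpa [hfr] using hr
    exact ⟨_, (Complex.nonneg_iff.1 hlim).1,
      Complex.eq_re_of_ofReal_le (by rwa [Complex.ofReal_zero])⟩

open scoped Classical in
lemma ultrafilterState_chi (I : Set κ) :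
    ultrafilterState U (chi I) = if I ∈ U then 1 else 0 := by
  refine tendsto_nhds_unique (tendsto_ultrafilterState U (chi I)) (tendsto_const_nhds.congr' ?_)
  split_ifs with hI
  · filter_upwards [hI] with i hi
    simp [chi, hi]
  · filter_upwards [Ultrafilter.compl_mem_iff_notMem.2 hI] with i hi
    simp [chi, Set.indicator_of_notMem hi]

lemma ultrafilterState_chi_iUnion
    (hσ : ∀ A : ℕ → Set κ, (∀ n, A n ∈ U) → (⋂ n, A n) ∈ U) {A : ℕ → Set κ} (hA : Pairwise (Function.onFun Disjoint A)) :
    ultrafilterState U (chi (⋃ n, A n)) = ∑' n, ultrafilterState U (chi (A n)) := by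
  simp only [ultrafilterState_chi]
  by_cases hU : (⋃ n, A n) ∈ U
  · obtain ⟨n, hn⟩ := U.exists_mem_of_iUnion_mem hσ hU
    have hother : ∀ m ≠ n, A m ∉ U := fun m hmn hm =>
      U.empty_notMem ((hA hmn).inter_eq ▸ U.inter_mem hm hn)
    rw [if_pos hU, tsum_eq_single n fun m hmn => if_neg (hother m hmn), if_pos hn]
  · have hnone : ∀ n, A n ∉ U := fun n hn => hU (mem_of_superset hn (Set.subset_iUnion A n))
    simp [hU, hnone]

end UltrafilterState

theorem stmt_8_general {κ : Type*} (U : Ultrafilter κ) :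
    (∃! φ : lp (fun _ : κ => ℂ) ∞ →L[ℂ] ℂ, IsState φ ∧
      ∀ f : lp (fun _ : κ => ℂ) ∞, Tendsto (fun i => f i) ↑U (nhds (φ f))) ∧
    ∀ φ : lp (fun _ : κ => ℂ) ∞ →L[ℂ] ℂ,
      (IsState φ ∧ ∀ f : lp (fun _ : κ => ℂ) ∞,
        Tendsto (fun i => f i) ↑U (nhds (φ f))) →
      (∀ I : Set κ, (I ∈ U → φ (chi I) = 1) ∧ (I ∉ U → φ (chi I) = 0)) ∧
      ((∀ A : Set κ, A.Finite → A ∉ U) →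
        (∀ A : ℕ → Set κ, (∀ n, A n ∈ U) → (⋂ n, A n) ∈ U) →
        (∀ I : Set κ, I.Finite → φ (chi I) = 0) ∧
        (∀ A : ℕ → Set κ, Pairwise (Function.onFun Disjoint A) →
          φ (chi (⋃ n, A n)) = ∑' n, φ (chi (A n)))) := by
  refine ⟨⟨ultrafilterState U, ⟨isState_ultrafilterState U, tendsto_ultrafilterState U⟩,
    fun ψ hψ => eq_ultrafilterState U hψ.2⟩, ?_⟩
  rintro φ ⟨-, hφ⟩
  obtain rfl := eq_ultrafilterState U hφ
  refine ⟨fun I => ⟨fun hI => by simp [ultrafilterState_chi, hI],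
    fun hI => by simp [ultrafilterState_chi, hI]⟩, fun hnonprincipal hσ => ⟨?_, ?_⟩⟩
  · intro I hI
    simp [ultrafilterState_chi, hnonprincipal I hI]
  · intro A hA
    exact ultrafilterState_chi_iUnion U hσ hA

theorem stmt_8 {κ : Type*} [Infinite κ] (U : Ultrafilter κ) :
    (∃! φ : lp (fun _ : κ => ℂ) ∞ →L[ℂ] ℂ, IsState φ ∧
      ∀ f : lp (fun _ : κ => ℂ) ∞, Tendsto (fun i => f i) ↑U (nhds (φ f))) ∧
    ∀ φ : lp (fun _ : κ => ℂ) ∞ →L[ℂ] ℂ,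
      (IsState φ ∧ ∀ f : lp (fun _ : κ => ℂ) ∞,
        Tendsto (fun i => f i) ↑U (nhds (φ f))) →
      (∀ I : Set κ, (I ∈ U → φ (chi I) = 1) ∧ (I ∉ U → φ (chi I) = 0)) ∧
      ((∀ A : Set κ, A.Finite → A ∉ U) →
        (∀ A : ℕ → Set κ, (∀ n, A n ∈ U) → (⋂ n, A n) ∈ U) →
        (∀ I : Set κ, I.Finite → φ (chi I) = 0) ∧
        (∀ A : ℕ → Set κ, Pairwise (Function.onFun Disjoint A) →
          φ (chi (⋃ n, A n)) = ∑' n, φ (chi (A n)))) :=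
  stmt_8_general U
end
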